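/- arXiv:2506.11579 — 3 statements merged into one kernel-verified Lean document; each statement's English description precedes it below -/
import Mathlib

section
/- For every ε ∈ (0, 3/10) and every s ∈ [0, π/12], one has 1/2 ≤ F_ε(s) < 4/5. -/
/-! On `[0, π/12]` both glued pieces take values in `[1/2, 4/5)`, and `F_ε` is a convex
combination of them with weight `χ(s) ∈ [0, 1]`. For the hyperbolic piece,
`ε cosh (s - log ε) = (eˢ + ε² e⁻ˢ) / 2`, which lies between `1/2` and `(e^{1/3} + ε²) / 2 < 4/5`;
for the spherical piece, `s + π/6 ∈ [π/6, π/4]` and `sin (π/4) = √2/2 < 4/5`. -/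

open Real Set

lemma mul_cosh_add_neg_log {ε : ℝ} (hε : 0 < ε) (s : ℝ) :
    ε * cosh (s + -log ε) = (exp s + ε ^ 2 * exp (-s)) / 2 := by
  rw [cosh_eq, neg_add, neg_neg, exp_add, exp_add, exp_neg (log ε), exp_log hε]
  field_simp

lemma exp_le_three_halves {s : ℝ} (hs : s ≤ 1 / 3) : exp s ≤ 3 / 2 :=
  calc exp s ≤ exp (1 / 3) := exp_le_exp.2 hs
    _ ≤ 1 / (1 - 1 / 3) := exp_bound_div_one_sub_of_interval (by norm_num) (by norm_num)
    _ = 3 / 2 := by norm_num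

lemma mul_cosh_add_neg_log_mem_Ico {ε s : ℝ} (hε : ε ∈ Ioo 0 (3 / 10))
    (hs : s ∈ Icc 0 (1 / 3)) : ε * cosh (s + -log ε) ∈ Ico (1 / 2) (4 / 5) := by
  have h_exp_ge : 1 ≤ exp s := one_le_exp hs.1
  have h_exp_le : exp s ≤ 3 / 2 := exp_le_three_halves hs.2
  have h_exp_neg_pos : 0 < exp (-s) := exp_pos _
  have h_exp_neg_le : exp (-s) ≤ 1 := exp_le_one_iff.2 (neg_nonpos.2 hs.1)
  have h_sq_lt : ε ^ 2 < 9 / 100 := by nlinarith [hε.1, hε.2]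
  rw [mul_cosh_add_neg_log hε.1]
  constructor <;> nlinarith [sq_nonneg ε]

lemma sin_add_pi_div_six_mem_Ico {s : ℝ} (hs : s ∈ Icc 0 (π / 12)) :
    sin (s + π / 6) ∈ Ico (1 / 2) (4 / 5) := by
  have hπ := pi_pos
  have h_mem : s + π / 6 ∈ Icc (-(π / 2)) (π / 2) := ⟨by linarith [hs.1], by linarith [hs.2]⟩
  have h_lo : sin (π / 6) ≤ sin (s + π / 6) :=
    sin_le_sin_of_le_of_le_pi_div_two (by linarith) h_mem.2 (by linarith [hs.1])
  have h_hi : sin (s + π / 6) ≤ sin (π / 4) :=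
    sin_le_sin_of_le_of_le_pi_div_two h_mem.1 (by linarith) (by linarith [hs.2])
  rw [sin_pi_div_six] at h_lo
  rw [sin_pi_div_four] at h_hi
  exact ⟨h_lo, by linarith [sqrt_two_lt_three_halves]⟩

theorem stmt_3_general (χ : ℝ → ℝ)
    (hχ01 : ∀ s ∈ Set.Icc (0 : ℝ) (Real.pi / 12), 0 ≤ χ s ∧ χ s ≤ 1)
    (ε : ℝ) (hε : ε ∈ Set.Ioo (0 : ℝ) (3 / 10))
    (s : ℝ) (hs : s ∈ Set.Icc (0 : ℝ) (Real.pi / 12)) :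
    1 / 2 ≤ χ s * (ε * Real.cosh (s + (-Real.log ε)))
              + (1 - χ s) * Real.sin (s + Real.pi / 6) ∧
    χ s * (ε * Real.cosh (s + (-Real.log ε)))
        + (1 - χ s) * Real.sin (s + Real.pi / 6) < 4 / 5 := by
  have hs_third : s ∈ Icc 0 (1 / 3) := ⟨hs.1, hs.2.trans (by linarith [pi_le_four])⟩
  obtain ⟨hχ_nonneg, hχ_le_one⟩ := hχ01 s hs
  exact convex_Ico (1 / 2 : ℝ) (4 / 5) (mul_cosh_add_neg_log_mem_Ico hε hs_third)
    (sin_add_pi_div_six_mem_Ico hs) hχ_nonneg (sub_nonneg.2 hχ_le_one) (add_sub_cancel _ _)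

/-- For a C² cut-off χ with 0 ≤ χ ≤ 1 on [0,π/12], χ = 1 on [0,π/36] and χ = 0 on
[π/18,π/12], the glued warping function
F_ε(s) = χ(s)·ε·cosh(s − log ε) + (1 − χ(s))·sin(s + π/6)
satisfies 1/2 ≤ F_ε(s) < 4/5 for every ε ∈ (0, 3/10) and s ∈ [0, π/12]. -/
theorem stmt_3 (χ : ℝ → ℝ) (hχ : ContDiff ℝ 2 χ)
    (hχ01 : ∀ s ∈ Set.Icc (0 : ℝ) (Real.pi / 12), 0 ≤ χ s ∧ χ s ≤ 1)
    (hχ1 : ∀ s ∈ Set.Icc (0 : ℝ) (Real.pi / 36), χ s = 1)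
    (hχ0 : ∀ s ∈ Set.Icc (Real.pi / 18) (Real.pi / 12), χ s = 0)
    (ε : ℝ) (hε : ε ∈ Set.Ioo (0 : ℝ) (3 / 10))
    (s : ℝ) (hs : s ∈ Set.Icc (0 : ℝ) (Real.pi / 12)) :
    1 / 2 ≤ χ s * (ε * Real.cosh (s + (-Real.log ε)))
              + (1 - χ s) * Real.sin (s + Real.pi / 6) ∧
    χ s * (ε * Real.cosh (s + (-Real.log ε)))
        + (1 - χ s) * Real.sin (s + Real.pi / 6) < 4 / 5 :=
  stmt_3_general χ hχ01 ε hε s hs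
end

section
/- There exist constants κ₁, κ₂ > 0 independent of ε such that for every ε ∈ (0, 3/10) and every s ∈ [0, π/12]: −F_ε″(s)/F_ε(s) ≥ −κ₁ and (1 − (F_ε′(s))²)/(F_ε(s))² ≥ −κ₂. (These two quantities are the sectional-curvature expressions of the warped-product metric ds² ⊕ F_ε(s)² g_{S^{n−1}} in the plane containing the radial direction and in a plane tangent to the sphere factor, respectively; hence the sectional curvature of the connecting region of the hyperbolic dumbbell is uniformly bounded below in ε.) -/
/-! On `[0, π/12]` the hyperbolic profile `ε cosh (s - log ε) = (eˢ + ε² e⁻ˢ) / 2` lies in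
`[1/2, 2]` uniformly in `ε ∈ (0, 1)`, and so do its first two derivatives (`|sinh| ≤ cosh`,
`cosh'' = cosh`); the spherical profile `sin (s + π/6)` is at least `1/2` there. `F_ε` is a convex
combination of the two, so `F_ε ≥ 1/2`, while `F_ε'` and `F_ε''` are bounded in terms of
`sup |χ'|` and `sup |χ''|` over the compact interval only. Dividing by `F_ε ≥ 1/2` bounds both
curvature expressions from below independently of `ε`. -/

open Real Set

lemma Real.abs_sinh_le_cosh (x : ℝ) : |sinh x| ≤ cosh x :=
  abs_le.2 ⟨by linarith [cosh_add_sinh x, exp_pos x], (sinh_lt_cosh x).le⟩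

lemma half_le_mul_cosh_add_neg_log {ε s : ℝ} (hε : 0 < ε) (hs : 0 ≤ s) :
    1 / 2 ≤ ε * cosh (s + -log ε) := by
  rw [mul_cosh_add_neg_log hε]
  linarith [one_le_exp hs, mul_nonneg (sq_nonneg ε) (exp_pos (-s)).le]

lemma mul_cosh_add_neg_log_le_two {ε s : ℝ} (hε₀ : 0 < ε) (hε₁ : ε ≤ 1) (hs₀ : 0 ≤ s)
    (hs₁ : s ≤ 1) : ε * cosh (s + -log ε) ≤ 2 := by
  rw [mul_cosh_add_neg_log hε₀]
  have h₁ : exp s < 3 := (exp_le_exp.2 hs₁).trans_lt exp_one_lt_three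
  have h₂ : ε ^ 2 * exp (-s) ≤ 1 :=
    mul_le_one₀ (pow_le_one₀ hε₀.le hε₁) (exp_pos _).le (exp_le_one_iff.2 (by linarith))
  linarith

lemma half_le_sin_add_pi_div_six {s : ℝ} (hs₀ : 0 ≤ s) (hs₁ : s ≤ π / 3) :
    1 / 2 ≤ sin (s + π / 6) := by
  rw [← sin_pi_div_six]
  exact strictMonoOn_sin.monotoneOn ⟨by linarith [pi_pos], by linarith⟩
    ⟨by linarith [pi_pos], by linarith⟩ (by linarith)

lemma ContDiff.exists_abs_deriv_le_on_Icc {χ : ℝ → ℝ} (hχ : ContDiff ℝ 2 χ) (a b : ℝ) :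
    ∃ M ≥ 0, ∀ s ∈ Icc a b, |deriv χ s| ≤ M ∧ |deriv (deriv χ) s| ≤ M := by
  have hχ' : ContDiff ℝ 1 (deriv χ) := (hχ : ContDiff ℝ (1 + 1) χ).deriv'
  have hg : Continuous fun s => |deriv χ s| + |deriv (deriv χ) s| :=
    (hχ.continuous_deriv one_le_two).abs.add (hχ'.continuous_deriv le_rfl).abs
  obtain ⟨C, hC⟩ := (isCompact_Icc (a := a) (b := b)).exists_bound_of_continuousOn hg.continuousOn
  refine ⟨max C 0, le_max_right _ _, fun s hs => ?_⟩
  have hsum := (le_abs_self _).trans ((hC s hs).trans (le_max_left C 0))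
  constructor <;> linarith [abs_nonneg (deriv χ s), abs_nonneg (deriv (deriv χ) s)]

def blend (χ f h : ℝ → ℝ) (t : ℝ) : ℝ := χ t * f t + (1 - χ t) * h t

section Blend

variable {χ f f' f'' h h' h'' : ℝ → ℝ} {x a B M : ℝ}

lemma le_blend (hχ : χ x ∈ Icc 0 1) (hf : a ≤ f x) (hh : a ≤ h x) : a ≤ blend χ f h x := by
  have := mul_le_mul_of_nonneg_left hf hχ.1
  have := mul_le_mul_of_nonneg_left hh (sub_nonneg.2 hχ.2)
  unfold blend
  linarith

lemma abs_blend_le (hχ : χ x ∈ Icc 0 1) (hf : |f x| ≤ B) (hh : |h x| ≤ B) :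
    |blend χ f h x| ≤ B := by
  refine abs_le.2 ⟨?_, ?_⟩
  · exact le_blend hχ (abs_le.1 hf).1 (abs_le.1 hh).1
  · have := le_blend (f := fun t => -f t) (h := fun t => -h t) hχ
      (neg_le_neg (abs_le.1 hf).2) (neg_le_neg (abs_le.1 hh).2)
    unfold blend at this ⊢
    linarith

lemma abs_mul_sub_le {m u v : ℝ} (hm : |m| ≤ M) (hu : |u| ≤ B) (hv : |v| ≤ B) :
    |m * (u - v)| ≤ M * (2 * B) := by
  rw [abs_mul]
  exact mul_le_mul hm ((abs_sub _ _).trans (by linarith)) (abs_nonneg _)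
    ((abs_nonneg _).trans hm)

lemma hasDerivAt_blend {χ' : ℝ} (hχ : HasDerivAt χ χ' x) (hf : HasDerivAt f (f' x) x)
    (hh : HasDerivAt h (h' x) x) :
    HasDerivAt (blend χ f h) (χ' * (f x - h x) + blend χ f' h' x) x :=
  ((hχ.mul hf).add ((hχ.const_sub 1).mul hh)).congr_deriv (by unfold blend; ring)

lemma deriv_blend (hχ : Differentiable ℝ χ) (hf : ∀ t, HasDerivAt f (f' t) t)
    (hh : ∀ t, HasDerivAt h (h' t) t) :
    deriv (blend χ f h) = fun t => deriv χ t * (f t - h t) + blend χ f' h' t :=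
  funext fun t => (hasDerivAt_blend (hχ t).hasDerivAt (hf t) (hh t)).deriv

lemma deriv_deriv_blend (hχ : ContDiff ℝ 2 χ) (hf : ∀ t, HasDerivAt f (f' t) t)
    (hf' : ∀ t, HasDerivAt f' (f'' t) t) (hh : ∀ t, HasDerivAt h (h' t) t)
    (hh' : ∀ t, HasDerivAt h' (h'' t) t) (x : ℝ) :
    deriv (deriv (blend χ f h)) x = deriv (deriv χ) x * (f x - h x)
      + 2 * (deriv χ x * (f' x - h' x)) + blend χ f'' h'' x := by
  have hχd : Differentiable ℝ χ := hχ.differentiable two_ne_zero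
  have hχ'd : Differentiable ℝ (deriv χ) :=
    ((hχ : ContDiff ℝ (1 + 1) χ).deriv').differentiable one_ne_zero
  rw [deriv_blend hχd hf hh]
  have : HasDerivAt (fun t => deriv χ t * (f t - h t) + blend χ f' h' t)
      (deriv (deriv χ) x * (f x - h x) + deriv χ x * (f' x - h' x)
        + (deriv χ x * (f' x - h' x) + blend χ f'' h'' x)) x :=
    ((hχ'd x).hasDerivAt.mul ((hf x).sub (hh x))).add
      (hasDerivAt_blend (hχd x).hasDerivAt (hf' x) (hh' x))
  rw [this.deriv]
  ring

lemma abs_deriv_blend_le (hχ : Differentiable ℝ χ) (hf : ∀ t, HasDerivAt f (f' t) t)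
    (hh : ∀ t, HasDerivAt h (h' t) t) (hχx : χ x ∈ Icc 0 1) (hχ'x : |deriv χ x| ≤ M)
    (hfx : |f x| ≤ B) (hhx : |h x| ≤ B) (hf'x : |f' x| ≤ B) (hh'x : |h' x| ≤ B) :
    |deriv (blend χ f h) x| ≤ M * (2 * B) + B := by
  rw [deriv_blend hχ hf hh]
  exact (abs_add_le _ _).trans
    (add_le_add (abs_mul_sub_le hχ'x hfx hhx) (abs_blend_le hχx hf'x hh'x))

lemma abs_deriv_deriv_blend_le (hχ : ContDiff ℝ 2 χ) (hf : ∀ t, HasDerivAt f (f' t) t)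
    (hf' : ∀ t, HasDerivAt f' (f'' t) t) (hh : ∀ t, HasDerivAt h (h' t) t)
    (hh' : ∀ t, HasDerivAt h' (h'' t) t) (hχx : χ x ∈ Icc 0 1) (hχ'x : |deriv χ x| ≤ M)
    (hχ''x : |deriv (deriv χ) x| ≤ M) (hfx : |f x| ≤ B) (hhx : |h x| ≤ B)
    (hf'x : |f' x| ≤ B) (hh'x : |h' x| ≤ B) (hf''x : |f'' x| ≤ B) (hh''x : |h'' x| ≤ B) :
    |deriv (deriv (blend χ f h)) x| ≤ 3 * (M * (2 * B)) + B := by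
  rw [deriv_deriv_blend hχ hf hf' hh hh']
  have h₁ := abs_mul_sub_le hχ''x hfx hhx
  have h₂ : |2 * (deriv χ x * (f' x - h' x))| ≤ 2 * (M * (2 * B)) := by
    rw [abs_mul, abs_two]
    linarith [abs_mul_sub_le hχ'x hf'x hh'x]
  have h₃ := abs_blend_le hχx hf''x hh''x
  linarith [abs_add_three (deriv (deriv χ) x * (f x - h x)) (2 * (deriv χ x * (f' x - h' x)))
    (blend χ f'' h'' x)]

end Blend

lemma neg_div_ge_of_abs_le {F G a C : ℝ} (ha : 0 < a) (hF : a ≤ F) (hG : |G| ≤ C) :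
    -G / F ≥ -(C / a) := by
  have : G / F ≤ C / a := calc
    G / F ≤ |G| / F := div_le_div_of_nonneg_right (le_abs_self G) (ha.trans_le hF).le
    _ ≤ C / a := div_le_div₀ ((abs_nonneg G).trans hG) hG ha hF
  rw [neg_div]
  exact neg_le_neg this

lemma one_sub_sq_div_sq_ge {F D a B : ℝ} (ha : 0 < a) (hF : a ≤ F) (hD : |D| ≤ B) :
    (1 - D ^ 2) / F ^ 2 ≥ -(B / a) ^ 2 := by
  have hF₀ : 0 < F := ha.trans_le hF
  have : |D| / F ≤ B / a := div_le_div₀ ((abs_nonneg D).trans hD) hD ha hF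
  calc -(B / a) ^ 2 ≤ -(|D| / F) ^ 2 := neg_le_neg (pow_le_pow_left₀ (by positivity) this 2)
    _ = -D ^ 2 / F ^ 2 := by rw [div_pow, sq_abs, neg_div]
    _ ≤ (1 - D ^ 2) / F ^ 2 := div_le_div_of_nonneg_right (by linarith) (by positivity)

theorem stmt_6_general (χ : ℝ → ℝ) (hχ : ContDiff ℝ 2 χ)
    (hχ01 : ∀ s ∈ Set.Icc (0 : ℝ) (Real.pi / 12), 0 ≤ χ s ∧ χ s ≤ 1)
    (F : ℝ → ℝ → ℝ)
    (hF : ∀ ε s, F ε s = χ s * (ε * Real.cosh (s + (-Real.log ε)))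
            + (1 - χ s) * Real.sin (s + Real.pi / 6)) :
    ∃ κ₁ > (0 : ℝ), ∃ κ₂ > (0 : ℝ),
      ∀ ε ∈ Set.Ioo (0 : ℝ) (3 / 10), ∀ s ∈ Set.Icc (0 : ℝ) (Real.pi / 12),
        -(deriv (deriv (F ε)) s) / F ε s ≥ -κ₁ ∧
        (1 - (deriv (F ε) s) ^ 2) / (F ε s) ^ 2 ≥ -κ₂ := by
  obtain ⟨M, hM₀, hM⟩ := hχ.exists_abs_deriv_le_on_Icc 0 (π / 12)
  refine ⟨(3 * (M * (2 * 2)) + 2) / (1 / 2), by positivity,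
    ((M * (2 * 2) + 2) / (1 / 2)) ^ 2, by positivity, ?_⟩
  rintro ε ⟨hε₀, hε⟩ s hs
  have hs₁ : s ≤ 1 := hs.2.trans (by linarith [pi_le_four])
  set f := fun t => ε * cosh (t + -log ε)
  have hFε : F ε = blend χ f (fun t => sin (t + π / 6)) := funext (hF ε)
  have hf : ∀ t, HasDerivAt f (ε * sinh (t + -log ε)) t := fun t => by
    simpa using (((hasDerivAt_id t).add_const _).cosh.const_mul ε)
  have hf' : ∀ t, HasDerivAt (fun t => ε * sinh (t + -log ε)) (f t) t := fun t => by
    simpa using (((hasDerivAt_id t).add_const _).sinh.const_mul ε)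
  have hh : ∀ t, HasDerivAt (fun t => sin (t + π / 6)) (cos (t + π / 6)) t := fun t => by
    simpa using ((hasDerivAt_id t).add_const _).sin
  have hh' : ∀ t, HasDerivAt (fun t => cos (t + π / 6)) (-sin (t + π / 6)) t := fun t => by
    simpa using ((hasDerivAt_id t).add_const _).cos
  have hfs_lo : 1 / 2 ≤ f s := half_le_mul_cosh_add_neg_log hε₀ hs.1
  have hfs : |f s| ≤ 2 := abs_le.2 ⟨by linarith,
    mul_cosh_add_neg_log_le_two hε₀ (by linarith) hs.1 hs₁⟩
  have hf's : |ε * sinh (s + -log ε)| ≤ 2 := by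
    rw [abs_mul, abs_of_pos hε₀]
    exact (mul_le_mul_of_nonneg_left (abs_sinh_le_cosh _) hε₀.le).trans (abs_le.1 hfs).2
  have hsin : |sin (s + π / 6)| ≤ 2 := (abs_sin_le_one _).trans one_le_two
  have hcos : |cos (s + π / 6)| ≤ 2 := (abs_cos_le_one _).trans one_le_two
  have hFs : 1 / 2 ≤ F ε s :=
    hFε ▸ le_blend (hχ01 s hs) hfs_lo (half_le_sin_add_pi_div_six hs.1 (by linarith [pi_pos, hs.2]))
  refine ⟨neg_div_ge_of_abs_le one_half_pos hFs ?_, one_sub_sq_div_sq_ge one_half_pos hFs ?_⟩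
  · rw [hFε]
    exact abs_deriv_deriv_blend_le hχ hf hf' hh hh' (hχ01 s hs) (hM s hs).1 (hM s hs).2 hfs hsin
      hf's hcos hfs (by rwa [abs_neg])
  · rw [hFε]
    exact abs_deriv_blend_le (hχ.differentiable two_ne_zero) hf hh (hχ01 s hs) (hM s hs).1 hfs
      hsin hf's hcos

/-- The sectional-curvature expressions of the warped-product metric with warping
function F_ε are uniformly bounded below on [0, π/12], uniformly in ε ∈ (0, 3/10). -/
theorem stmt_6 (χ : ℝ → ℝ) (hχ : ContDiff ℝ 2 χ)
    (hχ01 : ∀ s ∈ Set.Icc (0 : ℝ) (Real.pi / 12), 0 ≤ χ s ∧ χ s ≤ 1)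
    (hχ1 : ∀ s ∈ Set.Icc (0 : ℝ) (Real.pi / 36), χ s = 1)
    (hχ0 : ∀ s ∈ Set.Icc (Real.pi / 18) (Real.pi / 12), χ s = 0)
    (F : ℝ → ℝ → ℝ)
    (hF : ∀ ε s, F ε s = χ s * (ε * Real.cosh (s + (-Real.log ε)))
            + (1 - χ s) * Real.sin (s + Real.pi / 6)) :
    ∃ κ₁ > (0 : ℝ), ∃ κ₂ > (0 : ℝ),
      ∀ ε ∈ Set.Ioo (0 : ℝ) (3 / 10), ∀ s ∈ Set.Icc (0 : ℝ) (Real.pi / 12),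
        -(deriv (deriv (F ε)) s) / F ε s ≥ -κ₁ ∧
        (1 - (deriv (F ε) s) ^ 2) / (F ε s) ^ 2 ≥ -κ₂ :=
  stmt_6_general χ hχ hχ01 F hF
end

section
/- For every integer n ≥ 2 and every ε ∈ (0,1): ε^{n−1}·∫₀^{−log ε} (cosh r)^{n−1} dr ≤ (2^{(n+1)/2}/(π(n−1)))·∫_{π/4}^{3π/4} (sin r)^{n−1} dr. (Dividing both sides by (log ε)²·∫_{π/4}^{3π/4}(sin r)^{n−1} dr yields the bound C(n)/|log ε|² for the Rayleigh–Ritz quotient of the test co-closed p-form φ₁ on the hyperbolic dumbbell, with n = m − p.) -/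
/-!
Write `k = n - 1`. Since `cosh r ^ k ≤ exp (k r)` for `r ≥ 0`, the left-hand side is at most
`εᵏ (ε⁻ᵏ - 1) / k ≤ 1 / k`. On `[π/4, 3π/4]` one has `sin r ≥ √2/2`, so the sine integral is at
least `(π/2) 2^(-k/2)`, and the constant `2^((k+2)/2) / (π k)` turns this lower bound into
exactly `1 / k`.
-/

open Real intervalIntegral

lemma cosh_pow_le_exp_mul {x : ℝ} (hx : 0 ≤ x) (k : ℕ) : cosh x ^ k ≤ exp (k * x) := by
  rw [exp_nat_mul]
  refine pow_le_pow_left₀ (cosh_pos x).le ?_ k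
  have : exp (-x) ≤ exp x := exp_le_exp.mpr (by linarith)
  rw [cosh_eq]
  linarith

lemma integral_cosh_pow_le {L : ℝ} (hL : 0 ≤ L) {k : ℕ} (hk : k ≠ 0) :
    ∫ r in (0 : ℝ)..L, cosh r ^ k ≤ (exp (k * L) - 1) / k := by
  have hk' : (k : ℝ) ≠ 0 := Nat.cast_ne_zero.mpr hk
  calc ∫ r in (0 : ℝ)..L, cosh r ^ k ≤ ∫ r in (0 : ℝ)..L, exp (k * r) :=
        integral_mono_on hL ((continuous_cosh.pow k).intervalIntegrable _ _)
          ((continuous_exp.comp (continuous_const_mul _)).intervalIntegrable _ _)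
          fun x hx => cosh_pow_le_exp_mul hx.1 k
    _ = (exp (k * L) - 1) / k := by
        rw [integral_comp_mul_left (fun x => exp x) hk', integral_exp, mul_zero, exp_zero,
          smul_eq_mul, inv_mul_eq_div]

lemma pow_mul_integral_cosh_pow_neg_log_le {ε : ℝ} (hε₀ : 0 < ε) (hε₁ : ε ≤ 1) {k : ℕ}
    (hk : k ≠ 0) : ε ^ k * ∫ r in (0 : ℝ)..(-log ε), cosh r ^ k ≤ 1 / k := by
  have hεk : 0 < ε ^ k := pow_pos hε₀ k
  have hexp : exp (k * -log ε) = (ε ^ k)⁻¹ := by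
    rw [mul_neg, exp_neg, exp_nat_mul, exp_log hε₀]
  calc ε ^ k * ∫ r in (0 : ℝ)..(-log ε), cosh r ^ k
      ≤ ε ^ k * ((exp (k * -log ε) - 1) / k) :=
        mul_le_mul_of_nonneg_left
          (integral_cosh_pow_le (neg_nonneg.mpr (log_nonpos hε₀.le hε₁)) hk) hεk.le
    _ = (1 - ε ^ k) / k := by rw [hexp]; field_simp
    _ ≤ 1 / k := by gcongr; linarith

lemma sqrt_two_div_two_le_sin {x : ℝ} (hx : x ∈ Set.Icc (π / 4) (3 * π / 4)) :
    √2 / 2 ≤ sin x := by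
  rw [← cos_pi_div_two_sub, ← cos_abs, ← cos_pi_div_four]
  exact cos_le_cos_of_nonneg_of_le_pi (abs_nonneg _) (by linarith [pi_pos])
    (abs_le.mpr ⟨by linarith [hx.2], by linarith [hx.1]⟩)

lemma pi_div_two_mul_le_integral_sin_pow (k : ℕ) :
    π / 2 * (√2 / 2) ^ k ≤ ∫ r in (π / 4)..(3 * π / 4), sin r ^ k := by
  have h := integral_mono_on (μ := MeasureTheory.volume) (f := fun _ => (√2 / 2) ^ k)
    (by linarith [pi_pos]) intervalIntegrable_const
    ((continuous_sin.pow k).intervalIntegrable _ _)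
    fun x hx => pow_le_pow_left₀ (by positivity) (sqrt_two_div_two_le_sin hx) k
  rwa [integral_const, smul_eq_mul, show 3 * π / 4 - π / 4 = π / 2 by ring] at h

lemma two_rpow_mul_sqrt_two_div_two_pow (k : ℕ) :
    (2 : ℝ) ^ (((k : ℝ) + 2) / 2) * (√2 / 2) ^ k = 2 := by
  have hs : √2 / 2 = (2 : ℝ) ^ (-(1 / 2 : ℝ)) := by
    rw [rpow_neg zero_le_two, ← sqrt_eq_rpow, sqrt_div_self]
  rw [hs, ← rpow_natCast, ← rpow_mul zero_le_two, ← rpow_add two_pos,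
    show ((k : ℝ) + 2) / 2 + -(1 / 2) * k = 1 by ring, rpow_one]

/-- For every integer n ≥ 2 and ε ∈ (0,1):
ε^{n−1}·∫₀^{−log ε} cosh(r)^{n−1} dr
  ≤ (2^{(n+1)/2}/(π(n−1)))·∫_{π/4}^{3π/4} sin(r)^{n−1} dr. -/
theorem stmt_11 (n : ℕ) (hn : 2 ≤ n) (ε : ℝ) (hε : ε ∈ Set.Ioo (0 : ℝ) 1) :
    ε ^ (n - 1) * ∫ r in (0 : ℝ)..(-Real.log ε), (Real.cosh r) ^ (n - 1)
      ≤ ((2 : ℝ) ^ (((n : ℝ) + 1) / 2) / (Real.pi * ((n : ℝ) - 1)))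
          * ∫ r in (Real.pi / 4)..(3 * Real.pi / 4), (Real.sin r) ^ (n - 1) := by
  obtain ⟨k, rfl⟩ : ∃ k, n = k + 1 := ⟨n - 1, by omega⟩
  have hk : k ≠ 0 := by omega
  have hk' : (k : ℝ) ≠ 0 := Nat.cast_ne_zero.mpr hk
  simp only [Nat.add_sub_cancel, Nat.cast_add, Nat.cast_one, add_sub_cancel_right,
    show (k : ℝ) + 1 + 1 = k + 2 by ring]
  calc ε ^ k * ∫ r in (0 : ℝ)..(-log ε), cosh r ^ k ≤ 1 / k :=
        pow_mul_integral_cosh_pow_neg_log_le hε.1 hε.2.le hk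
    _ = 2 ^ (((k : ℝ) + 2) / 2) / (π * k) * (π / 2 * (√2 / 2) ^ k) := by
        rw [show ∀ a b : ℝ, a / (π * k) * (π / 2 * b) = a * b / (2 * k) by intros; field_simp,
          two_rpow_mul_sqrt_two_div_two_pow]
        field_simp
    _ ≤ 2 ^ (((k : ℝ) + 2) / 2) / (π * k) * ∫ r in (π / 4)..(3 * π / 4), sin r ^ k :=
        mul_le_mul_of_nonneg_left (pi_div_two_mul_le_integral_sin_pow k) (by positivity)
end
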